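/- If the distance quantifier D additionally satisfies the triangle inequality D(ρ,σ) ≤ D(ρ,δ) + D(δ,σ) for all states ρ, σ, δ, then for every quantum channel N the resource boosting power satisfies R_b(N) ≤ R(N), where R(N) = min_{M∈RNG} D(N,M) is the channel-distance-based monotone. -/

import Mathlib

set_option linter.unusedVariables false

noncomputable section

open scoped BigOperators ComplexOrder

/-! ## Basic objects: states and channels -/

/-- Square complex matrices of size `d` (the observables/operators of a `d`-dimensional system). -/
abbrev Mat (d : ℕ) := Matrix (Fin d) (Fin d) ℂ

/-- A quantum state: a positive semidefinite matrix of trace one. -/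
def IsState {d : ℕ} (ρ : Mat d) : Prop := ρ.PosSemidef ∧ ρ.trace = 1

/-- Linear maps between matrix algebras. -/
abbrev MMap (a b : ℕ) := Mat a →ₗ[ℂ] Mat b

/-- The identity channel on an `e`-dimensional system. -/
def idMap (e : ℕ) : MMap e e := LinearMap.id

/-- The `(i,j)` slice of a bipartite matrix, as a linear map. -/
def matSlice {a c : ℕ} (i j : Fin a) :
    Matrix (Fin a × Fin c) (Fin a × Fin c) ℂ →ₗ[ℂ] Mat c where
  toFun X := Matrix.of fun k l => X (i, k) (j, l)
  map_add' _ _ := rfl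
  map_smul' _ _ := rfl

/-- Tensor product of matrix maps, on product index types. -/
def tensorAux {a b c d : ℕ} (N : MMap a b) (M : MMap c d) :
    Matrix (Fin a × Fin c) (Fin a × Fin c) ℂ →ₗ[ℂ]
      Matrix (Fin b × Fin d) (Fin b × Fin d) ℂ where
  toFun X := Matrix.of fun q q' =>
    ∑ p : Fin a × Fin a,
      N (Matrix.single p.1 p.2 1) q.1 q'.1 * M (matSlice p.1 p.2 X) q.2 q'.2
  map_add' X Y := by
    ext q q'
    simp [map_add, Matrix.add_apply, mul_add, Finset.sum_add_distrib]
  map_smul' r X := by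
    ext q q'
    simp only [Matrix.of_apply, map_smul, Matrix.smul_apply, smul_eq_mul, RingHom.id_apply,
      Finset.mul_sum]
    exact Finset.sum_congr rfl fun p _ => by ring

/-- Tensor product `N ⊗ M` of matrix maps. -/
def tensorMap {a b c d : ℕ} (N : MMap a b) (M : MMap c d) : MMap (a * c) (b * d) :=
  (Matrix.reindexLinearEquiv ℂ ℂ finProdFinEquiv finProdFinEquiv).toLinearMap ∘ₗ
    tensorAux N M ∘ₗ
      (Matrix.reindexLinearEquiv ℂ ℂ finProdFinEquiv.symm finProdFinEquiv.symm).toLinearMap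

/-- Positive maps: maps preserving positive semidefiniteness. -/
def IsPosMap {a b : ℕ} (N : MMap a b) : Prop :=
  ∀ X : Mat a, X.PosSemidef → (N X).PosSemidef

/-- Completely positive maps: `N ⊗ id_E` is positive for every ancilla dimension. -/
def IsCP {a b : ℕ} (N : MMap a b) : Prop :=
  IsPosMap N ∧ ∀ e : ℕ, IsPosMap (tensorMap N (idMap e))

/-- Trace-preserving maps. -/
def IsTP {a b : ℕ} (N : MMap a b) : Prop := ∀ X : Mat a, (N X).trace = X.trace

/-- A quantum channel: a completely positive trace-preserving linear map. -/
def IsChannel {a b : ℕ} (N : MMap a b) : Prop := IsCP N ∧ IsTP N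

/-- Tensor product of two matrices (Kronecker product, reindexed to `Fin (a*c)`). -/
def tensorState {a c : ℕ} (ρ : Mat a) (σ : Mat c) : Mat (a * c) :=
  Matrix.reindex finProdFinEquiv finProdFinEquiv (Matrix.kroneckerMap (· * ·) ρ σ)

/-- The `n`-fold tensor power of a matrix map. -/
def chanPow {a b : ℕ} (N : MMap a b) : (n : ℕ) → MMap (a ^ n) (b ^ n)
  | 0 => idMap 1
  | n + 1 => tensorMap (chanPow N n) N

/-- The `n`-fold tensor power of a matrix. -/
def statePow {d : ℕ} (ρ : Mat d) : (n : ℕ) → Mat (d ^ n)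
  | 0 => 1
  | n + 1 => tensorState (statePow ρ n) ρ

/-- The trace norm of a matrix, as the sum of its singular values. -/
def traceNorm {d : ℕ} (A : Mat d) : ℝ :=
  ∑ i, Real.sqrt ((Matrix.isHermitian_conjTranspose_mul_self A).eigenvalues i)

/-- The diamond-norm distance between two matrix maps. -/
def diamondDist {a b : ℕ} (N M : MMap a b) : ℝ :=
  sSup {x : ℝ | ∃ (e : ℕ) (ρ : Mat (a * e)), IsState ρ ∧
    x = traceNorm (tensorMap (N - M) (idMap e) ρ)}

/-! ## State resource theories -/

/-- A distance quantifier: a real number assigned to each pair of equal-dimension matrices. -/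
def DQ : Type := ∀ d : ℕ, Mat d → Mat d → ℝ

/-- The defining properties of a distance quantifier: nonnegativity and data processing. -/
structure IsDistanceQuantifier (D : DQ) : Prop where
  nonneg : ∀ (d : ℕ) (ρ σ : Mat d), IsState ρ → IsState σ → 0 ≤ D d ρ σ
  eq_zero : ∀ (d : ℕ) (ρ σ : Mat d), IsState ρ → IsState σ → ρ = σ → D d ρ σ = 0
  dpi : ∀ (a b : ℕ) (N : MMap a b), IsChannel N → ∀ ρ σ : Mat a,
    IsState ρ → IsState σ → D b (N ρ) (N σ) ≤ D a ρ σ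

/-- An assignment of a set of free states to each system. -/
def FreeStates : Type := ∀ d : ℕ, Set (Mat d)

structure IsFreeStates (Ω : FreeStates) : Prop where
  nonempty : ∀ d : ℕ, 0 < d → (Ω d).Nonempty
  isState : ∀ (d : ℕ) (ω : Mat d), ω ∈ Ω d → IsState ω

/-- Resource-nongenerating channels: `(N ⊗ id_E)(ω)` is free for every free `ω` and ancilla `E`. -/
def RNG (Ω : FreeStates) {a b : ℕ} (N : MMap a b) : Prop :=
  ∀ (e : ℕ) (ω : Mat (a * e)), ω ∈ Ω (a * e) →
    tensorMap N (idMap e) ω ∈ Ω (b * e)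

/-- An assignment of a set of free operations between each pair of systems. -/
def FreeOps : Type := ∀ a b : ℕ, Set (MMap a b)

structure IsFreeOps (Ω : FreeStates) (Φ : FreeOps) : Prop where
  channel : ∀ (a b : ℕ) (φ : MMap a b), φ ∈ Φ a b → IsChannel φ
  maps_free : ∀ (a b : ℕ) (φ : MMap a b), φ ∈ Φ a b → ∀ ω ∈ Ω a, φ ω ∈ Ω b
  tensor_id : ∀ (a b : ℕ) (φ : MMap a b), φ ∈ Φ a b →
    ∀ e : ℕ, tensorMap φ (idMap e) ∈ Φ (a * e) (b * e)

/-- Channel distance induced by a state distance quantifier (maximized over all input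
states together with an arbitrary ancilla). -/
def chanDist (D : DQ) {a b : ℕ} (N M : MMap a b) : ℝ :=
  sSup {x : ℝ | ∃ (e : ℕ) (ρ : Mat (a * e)), IsState ρ ∧
    x = D (b * e) (tensorMap N (idMap e) ρ) (tensorMap M (idMap e) ρ)}

/-- Free-state-restricted channel distance. -/
def chanDistFree (D : DQ) (Ω : FreeStates) {a b : ℕ} (N M : MMap a b) : ℝ :=
  sSup {x : ℝ | ∃ (e : ℕ) (ω : Mat (a * e)), ω ∈ Ω (a * e) ∧
    x = D (b * e) (tensorMap N (idMap e) ω) (tensorMap M (idMap e) ω)}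

/-- Distance-based channel resource monotone `R(N) = min_{M ∈ RNG} D(N, M)`. -/
def Rmon (D : DQ) (Ω : FreeStates) {a b : ℕ} (N : MMap a b) : ℝ :=
  sInf {x : ℝ | ∃ M : MMap a b, IsChannel M ∧ RNG Ω M ∧ x = chanDist D N M}

/-- Free-state-restricted channel resource monotone `R_Ω(N) = min_{M ∈ RNG} D_Ω(N, M)`. -/
def ROmega (D : DQ) (Ω : FreeStates) {a b : ℕ} (N : MMap a b) : ℝ :=
  sInf {x : ℝ | ∃ M : MMap a b, IsChannel M ∧ RNG Ω M ∧ x = chanDistFree D Ω N M}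

/-- The state resource monotone induced by a distance quantifier: `μ(ρ) = min_{ω ∈ Ω} D(ρ, ω)`. -/
def muDist (D : DQ) (Ω : FreeStates) (d : ℕ) (ρ : Mat d) : ℝ :=
  sInf {x : ℝ | ∃ ω ∈ Ω d, x = D d ρ ω}

/-- The resource generating power of a channel, for a state resource measure `μ`. -/
def RgOf (μ : ∀ d : ℕ, Mat d → ℝ) (Ω : FreeStates) {a b : ℕ} (N : MMap a b) : ℝ :=
  sSup {x : ℝ | ∃ (e : ℕ) (ω : Mat (a * e)), ω ∈ Ω (a * e) ∧
    x = μ (b * e) (tensorMap N (idMap e) ω)}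

/-- The resource boosting power of a channel, for a state resource measure `μ`. -/
def RbOf (μ : ∀ d : ℕ, Mat d → ℝ) {a b : ℕ} (N : MMap a b) : ℝ :=
  sSup {x : ℝ | ∃ (e : ℕ) (ρ : Mat (a * e)), IsState ρ ∧
    x = μ (b * e) (tensorMap N (idMap e) ρ) - μ (a * e) ρ}

/-! ## Super-operations and asymptotic rates -/

/-- `N'` is obtained from `N` by a free super-operation `N' = φ₁ ∘ (N ⊗ id) ∘ φ₂`. -/
def IsFreeTransform (Φ : FreeOps) {a b c c' : ℕ} (N : MMap a b) (N' : MMap c c') : Prop :=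
  ∃ (e : ℕ) (φ₁ : MMap (b * e) c') (φ₂ : MMap c (a * e)),
    φ₁ ∈ Φ (b * e) c' ∧ φ₂ ∈ Φ c (a * e) ∧
    N' = φ₁ ∘ₗ tensorMap N (idMap e) ∘ₗ φ₂

/-- `IterComp Φ N M n` : `M` is a sequential composition `Λ₁(N) ∘ ⋯ ∘ Λₙ(N)` of `n`
outputs of free super-operations applied to `N`. -/
inductive IterComp (Φ : FreeOps) {a b : ℕ} (N : MMap a b) :
    ∀ {c c' : ℕ}, MMap c c' → ℕ → Prop
  | single {c c' : ℕ} (N' : MMap c c') : IsFreeTransform Φ N N' → IterComp Φ N N' 1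
  | comp {c c' c'' : ℕ} (M : MMap c c') (N' : MMap c' c'') (n : ℕ) :
      IterComp Φ N M n → IsFreeTransform Φ N N' → IterComp Φ N (N' ∘ₗ M) (n + 1)

/-- A rate `R` is achievable for parallel distillation of `N` into channels from `𝔊`. -/
def DistillAchievable (Φ : FreeOps) {g g' : ℕ} (𝔊 : Set (MMap g g')) {a b : ℕ}
    (N : MMap a b) (R : ℝ) : Prop :=
  ∀ ε : ℝ, 0 < ε → ∃ n₀ : ℕ, ∀ n : ℕ, n₀ ≤ n →
    ∃ G ∈ 𝔊, ∃ N' : MMap (g ^ Nat.floor ((n : ℝ) * R)) (g' ^ Nat.floor ((n : ℝ) * R)),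
      IsFreeTransform Φ (chanPow N n) N' ∧
      diamondDist N' (chanPow G (Nat.floor ((n : ℝ) * R))) ≤ ε

/-- The parallel channel distillation rate. -/
def Rdistill (Φ : FreeOps) {g g' : ℕ} (𝔊 : Set (MMap g g')) {a b : ℕ} (N : MMap a b) : ℝ :=
  sSup {R : ℝ | 0 ≤ R ∧ DistillAchievable Φ 𝔊 N R}

/-- A rate `R` is achievable for parallel dilution of channels from `𝔊` into `N`. -/
def DiluteAchievable (Φ : FreeOps) {g g' : ℕ} (𝔊 : Set (MMap g g')) {a b : ℕ}
    (N : MMap a b) (R : ℝ) : Prop :=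
  ∀ ε : ℝ, 0 < ε → ∃ n₀ : ℕ, ∀ n : ℕ, n₀ ≤ n →
    ∃ G ∈ 𝔊, ∃ N' : MMap (a ^ n) (b ^ n),
      IsFreeTransform Φ (chanPow G (Nat.ceil ((n : ℝ) * R))) N' ∧
      diamondDist N' (chanPow N n) ≤ ε

/-- The parallel channel dilution rate. -/
def Rdilute (Φ : FreeOps) {g g' : ℕ} (𝔊 : Set (MMap g g')) {a b : ℕ} (N : MMap a b) : ℝ :=
  sInf {R : ℝ | 0 ≤ R ∧ DiluteAchievable Φ 𝔊 N R}

/-- A rate `R` is achievable for iterative distillation of `N`. -/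
def IterDistillAchievable (Φ : FreeOps) {g g' : ℕ} (𝔊 : Set (MMap g g')) {a b : ℕ}
    (N : MMap a b) (R : ℝ) : Prop :=
  ∀ ε : ℝ, 0 < ε → ∃ n₀ : ℕ, ∀ n : ℕ, n₀ ≤ n →
    ∃ G ∈ 𝔊, ∃ N' : MMap (g ^ Nat.floor ((n : ℝ) * R)) (g' ^ Nat.floor ((n : ℝ) * R)),
      IterComp Φ N N' n ∧
      diamondDist N' (chanPow G (Nat.floor ((n : ℝ) * R))) ≤ ε

/-- The iterative channel distillation rate. -/
def RdistillIter (Φ : FreeOps) {g g' : ℕ} (𝔊 : Set (MMap g g')) {a b : ℕ} (N : MMap a b) : ℝ :=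
  sSup {R : ℝ | 0 ≤ R ∧ IterDistillAchievable Φ 𝔊 N R}

/-- A rate `R` is achievable for iterative dilution of channels from `𝔊` into `N`. -/
def IterDiluteAchievable (Φ : FreeOps) {g g' : ℕ} (𝔊 : Set (MMap g g')) {a b : ℕ}
    (N : MMap a b) (R : ℝ) : Prop :=
  ∀ ε : ℝ, 0 < ε → ∃ n₀ : ℕ, ∀ n : ℕ, n₀ ≤ n →
    ∃ G ∈ 𝔊, ∃ N' : MMap (a ^ n) (b ^ n),
      IterComp Φ G N' (Nat.ceil ((n : ℝ) * R)) ∧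
      diamondDist N' (chanPow N n) ≤ ε

/-- The iterative channel dilution rate. -/
def RdiluteIter (Φ : FreeOps) {g g' : ℕ} (𝔊 : Set (MMap g g')) {a b : ℕ} (N : MMap a b) : ℝ :=
  sInf {R : ℝ | 0 ≤ R ∧ IterDiluteAchievable Φ 𝔊 N R}

/-- The constant channel that outputs the state `ρm` on every input. -/
def constChan (a : ℕ) {g : ℕ} (ρm : Mat g) : MMap a g where
  toFun X := X.trace • ρm
  map_add' X Y := by simp [Matrix.trace_add, add_smul]
  map_smul' r X := by simp [Matrix.trace_smul, smul_smul]

/-- The asymptotic state distillation rate (towards the maximal resource state `ρm`). -/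
def muDistill (Φ : FreeOps) {g : ℕ} (ρm : Mat g) (d : ℕ) (σ : Mat d) : ℝ :=
  sSup {R : ℝ | 0 ≤ R ∧ ∀ ε : ℝ, 0 < ε → ∃ n₀ : ℕ, ∀ n : ℕ, n₀ ≤ n →
    ∃ φ ∈ Φ (d ^ n) (g ^ Nat.floor ((n : ℝ) * R)),
      traceNorm (φ (statePow σ n) - statePow ρm (Nat.floor ((n : ℝ) * R))) ≤ ε}

/-- The asymptotic state dilution rate (from the maximal resource state `ρm`). -/
def muDilute (Φ : FreeOps) {g : ℕ} (ρm : Mat g) (d : ℕ) (σ : Mat d) : ℝ :=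
  sInf {R : ℝ | 0 ≤ R ∧ ∀ ε : ℝ, 0 < ε → ∃ n₀ : ℕ, ∀ n : ℕ, n₀ ≤ n →
    ∃ φ ∈ Φ (g ^ Nat.ceil ((n : ℝ) * R)) (d ^ n),
      traceNorm (φ (statePow ρm (Nat.ceil ((n : ℝ) * R))) - statePow σ n) ≤ ε}

/-! ## Coherence -/

/-- Incoherent (diagonal) matrices with respect to the computational basis. -/
def IsIncoherent {d : ℕ} (ρ : Mat d) : Prop := ∀ i j : Fin d, i ≠ j → ρ i j = 0

/-- Matrix logarithm via the continuous functional calculus. -/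
def matLog {d : ℕ} (A : Mat d) : Mat d := cfc Real.log A

/-- The quantum relative entropy `S(ρ‖σ) = Tr ρ (log ρ − log σ)`. -/
def relEnt {d : ℕ} (ρ σ : Mat d) : ℝ := ((ρ * (matLog ρ - matLog σ)).trace).re

/-- The relative entropy of coherence `C_r(ρ) = min_{δ incoherent} S(ρ‖δ)`. -/
def Cr {d : ℕ} (ρ : Mat d) : ℝ :=
  sInf {x : ℝ | ∃ δ : Mat d, IsState δ ∧ IsIncoherent δ ∧ x = relEnt ρ δ}

/-- Maximally incoherent operations: channels mapping incoherent states to incoherent states. -/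
def MIO : FreeOps := fun a b =>
  {M | IsChannel M ∧ ∀ δ : Mat a, IsState δ → IsIncoherent δ → IsIncoherent (M δ)}

/-- The coherence generating power of a channel. -/
def Crg {a b : ℕ} (N : MMap a b) : ℝ :=
  sSup {x : ℝ | ∃ (e : ℕ) (δ : Mat (a * e)), IsState δ ∧ IsIncoherent δ ∧
    x = Cr (tensorMap N (idMap e) δ)}

/-- The coherence boosting power of a channel. -/
def Crb {a b : ℕ} (N : MMap a b) : ℝ :=
  sSup {x : ℝ | ∃ (e : ℕ) (ρ : Mat (a * e)), IsState ρ ∧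
    x = Cr (tensorMap N (idMap e) ρ) - Cr ρ}

/-- `C_{r,I}(N)`: the free-state-restricted relative-entropy distance from `N` to MIO. -/
def CrI {a b : ℕ} (N : MMap a b) : ℝ :=
  sInf {x : ℝ | ∃ M : MMap a b, M ∈ MIO a b ∧
    x = sSup {y : ℝ | ∃ (e : ℕ) (δ : Mat (a * e)), IsState δ ∧ IsIncoherent δ ∧
      y = relEnt (tensorMap N (idMap e) δ) (tensorMap M (idMap e) δ)}}

/-- The maximally coherent qubit state `Ψ₂`. -/
def Psi2 : Mat 2 := Matrix.of fun _ _ => (1 / 2 : ℂ)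

/-- The optimal unit resource channel for coherence: the constant channel with output `Ψ₂`. -/
def Gstar : MMap 2 2 := constChan 2 Psi2

/-- The smooth max entropy of channel coherence. -/
def CmaxEps (ε : ℝ) {a b : ℕ} (N : MMap a b) : ℝ :=
  sInf {x : ℝ | ∃ N' : MMap a b, IsChannel N' ∧ diamondDist N N' ≤ ε ∧
    x = Real.log (sInf {l : ℝ | ∃ M ∈ MIO a b, IsCP ((l : ℂ) • M - N')})}

/-!
If `M` is resource nongenerating, `M ⊗ id` maps every free state `ω` to a free state, so by the
triangle inequality and data processing
`μ((N ⊗ id) ρ) ≤ D((N ⊗ id) ρ, (M ⊗ id) ρ) + D((M ⊗ id) ρ, (M ⊗ id) ω) ≤ D(N, M) + D(ρ, ω)`.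
Minimising over `ω`, then taking the supremum over `ρ` and the infimum over `M`, gives the bound.
-/

def ancillaBlock {a e : ℕ} (X : Mat (a * e)) (k l : Fin e) : Mat a :=
  Matrix.of fun p p' => X (finProdFinEquiv (p, k)) (finProdFinEquiv (p', l))

theorem tensorMap_idMap_apply {a b e : ℕ} (N : MMap a b) (X : Mat (a * e))
    (i j : Fin b) (k l : Fin e) :
    tensorMap N (idMap e) X (finProdFinEquiv (i, k)) (finProdFinEquiv (j, l)) =
      N (ancillaBlock X k l) i j := by
  have hX : ancillaBlock X k l =
      ∑ p : Fin a × Fin a, ancillaBlock X k l p.1 p.2 • Matrix.single p.1 p.2 1 := by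
    rw [Fintype.sum_prod_type]
    simp only [Matrix.smul_single, smul_eq_mul, mul_one]
    exact Matrix.matrix_eq_sum_single _
  rw [hX, map_sum, Matrix.sum_apply]
  refine Finset.sum_congr rfl fun p _ => ?_
  rw [map_smul, Matrix.smul_apply, smul_eq_mul, mul_comm]
  simp only [Equiv.symm_apply_apply]
  rfl

-- `finProdFinEquiv` is row-major, `(i, k) ↦ k + e * i`, so reassociating is just a cast.
theorem finProdFinEquiv_assoc {a e e' : ℕ} (i : Fin a) (k : Fin e) (k' : Fin e') :
    Fin.cast (Nat.mul_assoc a e e') (finProdFinEquiv (finProdFinEquiv (i, k), k')) =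
      finProdFinEquiv (i, finProdFinEquiv (k, k')) := by
  ext
  simp [finProdFinEquiv]
  ring

theorem tensorMap_tensorMap_idMap {a b : ℕ} (M : MMap a b) (e e' : ℕ) (X : Mat (a * e * e')) :
    tensorMap (tensorMap M (idMap e)) (idMap e') X =
      (tensorMap M (idMap (e * e'))
          (X.submatrix (Fin.cast (Nat.mul_assoc a e e').symm)
            (Fin.cast (Nat.mul_assoc a e e').symm))).submatrix
        (Fin.cast (Nat.mul_assoc b e e')) (Fin.cast (Nat.mul_assoc b e e')) := by
  ext w w'
  obtain ⟨⟨x, k'⟩, rfl⟩ := finProdFinEquiv.surjective w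
  obtain ⟨⟨i, k⟩, rfl⟩ := finProdFinEquiv.surjective x
  obtain ⟨⟨x', l'⟩, rfl⟩ := finProdFinEquiv.surjective w'
  obtain ⟨⟨j, l⟩, rfl⟩ := finProdFinEquiv.surjective x'
  rw [Matrix.submatrix_apply, finProdFinEquiv_assoc, finProdFinEquiv_assoc,
    tensorMap_idMap_apply, tensorMap_idMap_apply, tensorMap_idMap_apply]
  refine congrArg (fun Y => M Y i j) ?_
  ext p p'
  simp [ancillaBlock, ← finProdFinEquiv_assoc]

theorem IsTP.tensorMap_idMap {a b : ℕ} {N : MMap a b} (hN : IsTP N) (e : ℕ) :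
    IsTP (tensorMap N (idMap e)) := by
  intro X
  calc (tensorMap N (idMap e) X).trace
      = ∑ q : Fin b × Fin e,
          tensorMap N (idMap e) X (finProdFinEquiv q) (finProdFinEquiv q) :=
        (Equiv.sum_comp finProdFinEquiv _).symm
    _ = ∑ k, (N (ancillaBlock X k k)).trace := by
        simp only [tensorMap_idMap_apply, Fintype.sum_prod_type, Matrix.trace, Matrix.diag]
        exact Finset.sum_comm
    _ = ∑ k, (ancillaBlock X k k).trace := Finset.sum_congr rfl fun k _ => hN _
    _ = X.trace := by
        simp only [Matrix.trace, Matrix.diag, ancillaBlock, Matrix.of_apply]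
        rw [Finset.sum_comm]
        exact (Fintype.sum_prod_type' fun p k => X (finProdFinEquiv (p, k))
          (finProdFinEquiv (p, k))).symm.trans (Equiv.sum_comp finProdFinEquiv fun q => X q q)

theorem IsCP.tensorMap_idMap {a b : ℕ} {N : MMap a b} (hN : IsCP N) (e : ℕ) :
    IsCP (tensorMap N (idMap e)) :=
  ⟨hN.2 e, fun e' X hX => by
    rw [tensorMap_tensorMap_idMap]
    exact (hN.2 _ _ (hX.submatrix _)).submatrix _⟩

theorem IsChannel.tensorMap_idMap {a b : ℕ} {N : MMap a b} (hN : IsChannel N) (e : ℕ) :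
    IsChannel (tensorMap N (idMap e)) :=
  ⟨hN.1.tensorMap_idMap e, hN.2.tensorMap_idMap e⟩

theorem IsChannel.isState_apply {a b : ℕ} {N : MMap a b} (hN : IsChannel N) {ρ : Mat a}
    (hρ : IsState ρ) : IsState (N ρ) :=
  ⟨hN.1.1 ρ hρ.1, (hN.2 ρ).trans hρ.2⟩

def measPrepare {n d : ℕ} (s : Fin n → Mat d) : MMap n d where
  toFun X := ∑ i, X i i • s i
  map_add' X Y := by simp [add_smul, Finset.sum_add_distrib]
  map_smul' r X := by simp [Finset.smul_sum, smul_smul]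

theorem measPrepare_single {n d : ℕ} (s : Fin n → Mat d) (j : Fin n) :
    measPrepare s (Matrix.single j j 1) = s j := by
  simp [measPrepare, Matrix.single_apply]

theorem tensorMap_measPrepare_idMap {n d : ℕ} (s : Fin n → Mat d) (e : ℕ) (X : Mat (n * e)) :
    tensorMap (measPrepare s) (idMap e) X =
      ∑ i, tensorState (s i)
        (X.submatrix (fun k => finProdFinEquiv (i, k)) (fun k => finProdFinEquiv (i, k))) := by
  ext w w'
  obtain ⟨⟨p, k⟩, rfl⟩ := finProdFinEquiv.surjective w
  obtain ⟨⟨p', l⟩, rfl⟩ := finProdFinEquiv.surjective w'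
  simp [tensorMap_idMap_apply, measPrepare, ancillaBlock, tensorState, Matrix.sum_apply,
    mul_comm]

theorem isChannel_measPrepare {n d : ℕ} {s : Fin n → Mat d} (hs : ∀ i, IsState (s i)) :
    IsChannel (measPrepare s) := by
  refine ⟨⟨fun X hX => ?_, fun e X hX => ?_⟩, fun X => ?_⟩
  · exact Matrix.posSemidef_sum _ fun i _ => (hs i).1.smul hX.diag_nonneg
  · rw [tensorMap_measPrepare_idMap]
    exact Matrix.posSemidef_sum _ fun i _ =>
      ((hs i).1.kronecker (hX.submatrix _)).submatrix _
  · change (∑ i, X i i • s i).trace = X.trace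
    simp only [Matrix.trace_sum, Matrix.trace_smul, (hs _).2, smul_eq_mul, mul_one]
    rfl

theorem isState_single {d : ℕ} (i : Fin d) : IsState (Matrix.single i i (1 : ℂ)) := by
  rw [← Matrix.diagonal_single]
  refine ⟨Matrix.PosSemidef.diagonal fun j => ?_, by simp [Matrix.trace_diagonal]⟩
  rcases eq_or_ne j i with rfl | h <;> simp [*]

/-- A uniform bound via data processing through a measure-and-prepare channel: without it the
real `sSup` defining `chanDist` could be the junk value `0`. -/
theorem IsDistanceQuantifier.le_dist_single_single {D : DQ} (hD : IsDistanceQuantifier D)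
    {d : ℕ} {ρ σ : Mat d} (hρ : IsState ρ) (hσ : IsState σ) :
    D d ρ σ ≤ D 2 (Matrix.single 0 0 1) (Matrix.single 1 1 1) := by
  have hs : ∀ i, IsState (![ρ, σ] i) := Fin.forall_fin_two.mpr ⟨hρ, hσ⟩
  simpa [measPrepare_single] using
    hD.dpi _ _ _ (isChannel_measPrepare hs) _ _ (isState_single 0) (isState_single 1)

theorem IsState.pos_dim {d : ℕ} {ρ : Mat d} (hρ : IsState ρ) : 0 < d := by
  refine Nat.pos_of_ne_zero fun hd => ?_
  subst hd
  simpa [Matrix.trace] using hρ.2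

section ResourceTheory

variable {D : DQ} {Ω : FreeStates}

theorem muDist_le (hD : IsDistanceQuantifier D) (hΩ : IsFreeStates Ω) {d : ℕ} {ρ ω : Mat d}
    (hρ : IsState ρ) (hω : ω ∈ Ω d) : muDist D Ω d ρ ≤ D d ρ ω :=
  csInf_le ⟨0, by rintro _ ⟨ω', hω', rfl⟩; exact hD.nonneg _ _ _ hρ (hΩ.isState _ _ hω')⟩
    ⟨ω, hω, rfl⟩

theorem muDist_le_dist_add_muDist (hD : IsDistanceQuantifier D) (hΩ : IsFreeStates Ω)
    (htriangle : ∀ (d : ℕ) (ρ σ δ : Mat d), IsState ρ → IsState σ → IsState δ →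
      D d ρ σ ≤ D d ρ δ + D d δ σ)
    {a b : ℕ} {Λ : MMap a b} (hΛ : IsChannel Λ) (hΛΩ : ∀ ω ∈ Ω a, Λ ω ∈ Ω b)
    {σ : Mat b} {ρ : Mat a} (hσ : IsState σ) (hρ : IsState ρ) :
    muDist D Ω b σ ≤ D b σ (Λ ρ) + muDist D Ω a ρ := by
  rw [← sub_le_iff_le_add']
  obtain ⟨ω₀, hω₀⟩ := hΩ.nonempty a hρ.pos_dim
  refine le_csInf ⟨_, ω₀, hω₀, rfl⟩ ?_
  rintro _ ⟨ω, hω, rfl⟩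
  have hωs := hΩ.isState _ _ hω
  refine sub_le_iff_le_add'.mpr ?_
  calc muDist D Ω b σ ≤ D b σ (Λ ω) := muDist_le hD hΩ hσ (hΛΩ ω hω)
    _ ≤ D b σ (Λ ρ) + D b (Λ ρ) (Λ ω) :=
      htriangle _ _ _ _ hσ (hΛ.isState_apply hωs) (hΛ.isState_apply hρ)
    _ ≤ D b σ (Λ ρ) + D a ρ ω := by gcongr; exact hD.dpi _ _ _ hΛ _ _ hρ hωs

variable {a b : ℕ} {N M : MMap a b}

theorem dist_le_chanDist (hD : IsDistanceQuantifier D) (hN : IsChannel N) (hM : IsChannel M)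
    (e : ℕ) {ρ : Mat (a * e)} (hρ : IsState ρ) :
    D (b * e) (tensorMap N (idMap e) ρ) (tensorMap M (idMap e) ρ) ≤ chanDist D N M := by
  refine le_csSup ⟨D 2 (Matrix.single 0 0 1) (Matrix.single 1 1 1), ?_⟩ ⟨e, ρ, hρ, rfl⟩
  rintro _ ⟨e', ρ', hρ', rfl⟩
  exact hD.le_dist_single_single ((hN.tensorMap_idMap e').isState_apply hρ')
    ((hM.tensorMap_idMap e').isState_apply hρ')

theorem chanDist_nonneg (hD : IsDistanceQuantifier D) (hN : IsChannel N) (hM : IsChannel M) :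
    0 ≤ chanDist D N M :=
  Real.sSup_nonneg <| by
    rintro _ ⟨e, ρ, hρ, rfl⟩
    exact hD.nonneg _ _ _ ((hN.tensorMap_idMap e).isState_apply hρ)
      ((hM.tensorMap_idMap e).isState_apply hρ)

theorem RbOf_muDist_le_chanDist (hD : IsDistanceQuantifier D) (hΩ : IsFreeStates Ω)
    (htriangle : ∀ (d : ℕ) (ρ σ δ : Mat d), IsState ρ → IsState σ → IsState δ →
      D d ρ σ ≤ D d ρ δ + D d δ σ)
    (hN : IsChannel N) (hM : IsChannel M) (hMΩ : RNG Ω M) :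
    RbOf (muDist D Ω) N ≤ chanDist D N M := by
  refine Real.sSup_le ?_ (chanDist_nonneg hD hN hM)
  rintro _ ⟨e, ρ, hρ, rfl⟩
  have hboost := muDist_le_dist_add_muDist hD hΩ htriangle (hM.tensorMap_idMap e) (hMΩ e)
    ((hN.tensorMap_idMap e).isState_apply hρ) hρ
  have hdist := dist_le_chanDist hD hN hM e hρ
  linarith

end ResourceTheory

/-- If the distance quantifier `D` additionally satisfies the triangle
inequality, then for every quantum channel `N` the resource boosting power satisfies
`R_b(N) ≤ R(N)`, where `R` is the channel-distance-based monotone (the set of RNG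
channels being assumed nonempty). -/
theorem Rb_le_Rmon
    (D : DQ) (hD : IsDistanceQuantifier D) (Ω : FreeStates) (hΩ : IsFreeStates Ω)
    (htriangle : ∀ (d : ℕ) (ρ σ δ : Mat d), IsState ρ → IsState σ → IsState δ →
      D d ρ σ ≤ D d ρ δ + D d δ σ) :
    ∀ (a b : ℕ) (N : MMap a b), IsChannel N →
      (∃ M : MMap a b, IsChannel M ∧ RNG Ω M) →
      RbOf (muDist D Ω) N ≤ Rmon D Ω N := by
  rintro a b N hN ⟨M, hM, hMΩ⟩
  refine le_csInf ⟨_, M, hM, hMΩ, rfl⟩ ?_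
  rintro _ ⟨M', hM', hM'Ω, rfl⟩
  exact RbOf_muDist_le_chanDist hD hΩ htriangle hN hM' hM'Ω

end
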